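/- arXiv:1904.03563 — 8 statements merged into one kernel-verified Lean document; each statement's English description precedes it below -/
import Mathlib

section
/- Let f : ℝⁿ → ℝ be continuous on the nonnegative orthant and twice continuously differentiable on its interior, and let x* ≥ 0 be a local minimizer of f over the nonnegative orthant {x ∈ ℝⁿ : x ≥ 0}. Then there exist a sequence (xᵏ) in ℝⁿ with xᵏ > 0 componentwise for all k and xᵏ → x*, sequences (sᵏ) and (θᵏ) in ℝⁿ with sᵏ ≥ 0 and θᵏ ≥ 0 componentwise, and a sequence of scalars (δₖ) with δₖ > 0 and δₖ → 0, such that: (i) ∇f(xᵏ) − sᵏ → 0; (ii) min(xᵢᵏ, 1)·sᵢᵏ → 0 for every coordinate i = 1,…,n; (iii) the matrix ∇²f(xᵏ) + diag(θᵏ) + δₖI is positive semidefinite for every k; and (iv) min(xᵢᵏ, 1)²·θᵢᵏ → 0 for every coordinate i = 1,…,n. -/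
/-!
For small `μ > 0` minimize the barrier function `f x + ‖x - x*‖⁴ - μ ∑ᵢ log xᵢ` (Euclidean norm)
over a small ball around `x*` cut down to a slab `t ≤ xᵢ`. Since `x*` minimizes `f` locally on the
orthant, the quartic penalty pins the minimizer near `x*` once `μ` is small, and the logarithm keeps
it off the faces of the slab once `t` is small, so it is an unconstrained local minimizer `xᵏ > 0`.
Its first- and second-order conditions read `∇f(xᵏ) = μ / xᵏ - 4‖xᵏ - x*‖²(xᵏ - x*)` and
`∇²f(xᵏ) + diag(μ / (xᵏ)²) + 12‖xᵏ - x*‖² I ⪰ 0` (the Hessian of the quartic penalty is at most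
`12‖x - x*‖² I` by Cauchy–Schwarz). Hence `sᵏ = μ / xᵏ`, `θᵏ = μ / (xᵏ)²` and
`δₖ = 12‖xᵏ - x*‖² + μ` work, with `min(xᵢᵏ, 1) sᵢᵏ ≤ μ` and `min(xᵢᵏ, 1)² θᵢᵏ ≤ μ`.
-/

open Matrix Filter Topology

/-- The continuous linear map `w ↦ ∑ i, v i * w i`, representing the gradient vector `v`
as the Fréchet derivative of a scalar function. -/
noncomputable def dotCLM {n : ℕ} (v : Fin n → ℝ) : (Fin n → ℝ) →L[ℝ] ℝ :=
  ∑ i, v i • (ContinuousLinearMap.proj i : (Fin n → ℝ) →L[ℝ] ℝ)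

/-- The continuous linear map `w ↦ A *ᵥ w`, representing the Hessian matrix `A`
as the Fréchet derivative of the gradient map. -/
noncomputable def mulVecCLM {n : ℕ} (A : Matrix (Fin n) (Fin n) ℝ) :
    (Fin n → ℝ) →L[ℝ] (Fin n → ℝ) :=
  LinearMap.toContinuousLinearMap A.mulVecLin

theorem IsLocalMin.nonneg_of_hasDerivAt_deriv {φ ψ : ℝ → ℝ} {x₀ c : ℝ} (hmin : IsLocalMin φ x₀)
    (hφ : ∀ᶠ t in 𝓝 x₀, HasDerivAt φ (ψ t) t) (hψ : HasDerivAt ψ c x₀) : 0 ≤ c := by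
  by_contra! hc
  have hdd : HasDerivAt (deriv φ) c x₀ := hψ.congr_of_eventuallyEq (hφ.mono fun t ht => ht.deriv)
  -- For `c < 0` the second-derivative test makes `x₀` a local maximum too, so `φ` is locally
  -- constant near `x₀` and its second derivative `c` vanishes.
  have hmax : IsLocalMax φ x₀ :=
    isLocalMax_of_deriv_deriv_neg (hdd.deriv ▸ hc) hmin.deriv_eq_zero hφ.self_of_nhds.continuousAt
  have hconst : φ =ᶠ[𝓝 x₀] fun _ => φ x₀ := (hmin.and hmax).mono fun t ht => le_antisymm ht.2 ht.1
  have hd0 : deriv φ =ᶠ[𝓝 x₀] fun _ => 0 :=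
    hconst.eventuallyEq_nhds.mono fun t ht => by rw [ht.deriv_eq, deriv_const]
  exact hc.ne ((hdd.congr_of_eventuallyEq hd0.symm).unique (hasDerivAt_const x₀ 0))

theorem IsLocalMin.nonneg_of_hasFDerivAt_fderiv_apply {E : Type*} [NormedAddCommGroup E]
    [NormedSpace ℝ E] {F : E → ℝ} {F' : E → E →L[ℝ] ℝ} {ℓ : E →L[ℝ] ℝ} {x₀ : E}
    (hmin : IsLocalMin F x₀) (hF : ∀ᶠ y in 𝓝 x₀, HasFDerivAt F (F' y) y) (v : E)
    (hF' : HasFDerivAt (fun y => F' y v) ℓ x₀) : 0 ≤ ℓ v := by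
  set L : ℝ → E := fun t => x₀ + t • v
  have hL : ∀ t, HasDerivAt L v t := fun t =>
    by simpa [L] using ((hasDerivAt_id t).smul_const v).const_add x₀
  have hL0 : L 0 = x₀ := by simp [L]
  have hLt : Tendsto L (𝓝 0) (𝓝 x₀) := hL0 ▸ (hL 0).continuousAt.tendsto
  refine IsLocalMin.nonneg_of_hasDerivAt_deriv (φ := F ∘ L) (ψ := fun t => F' (L t) v)
    ((hL0 ▸ hmin).comp_continuous (hL 0).continuousAt) ?_ ?_
  · exact (hLt.eventually hF).mono fun t ht => ht.comp_hasDerivAt t (hL t)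
  · exact (hL0 ▸ hF').comp_hasDerivAt (0 : ℝ) (hL 0)

lemma exists_pos_le_mul_le {A ε η : ℝ} (hA : 0 ≤ A) (hε : 0 < ε) (hη : 0 < η) :
    ∃ μ, 0 < μ ∧ μ ≤ η ∧ μ * A ≤ ε := by
  refine ⟨min η (ε / (A + 1)), by positivity, min_le_left _ _, ?_⟩
  calc min η (ε / (A + 1)) * A ≤ ε / (A + 1) * (A + 1) := by
        gcongr
        · exact min_le_right _ _
        · linarith
    _ = ε := div_mul_cancel₀ _ (by positivity)

lemma tendsto_min_one_pow_mul_div {ι : Type*} {l : Filter ι} {x μ : ι → ℝ} (m : ℕ)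
    (hx : ∀ k, 0 < x k) (hμ : ∀ k, 0 ≤ μ k) (hμ0 : Tendsto μ l (𝓝 0)) :
    Tendsto (fun k => min (x k) 1 ^ m * (μ k / x k ^ m)) l (𝓝 0) := by
  refine squeeze_zero (fun k => ?_) (fun k => ?_) hμ0
  · have := hx k; have := hμ k; positivity
  · calc min (x k) 1 ^ m * (μ k / x k ^ m) ≤ x k ^ m * (μ k / x k ^ m) := by
          have := hx k; have := hμ k
          gcongr
          exact min_le_left _ _
      _ = μ k := mul_div_cancel₀ _ (pow_pos (hx k) m).ne'

section DotCLM

variable {n : ℕ}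

@[simp]
lemma dotCLM_apply (v w : Fin n → ℝ) : dotCLM v w = v ⬝ᵥ w := by
  simp [dotCLM, dotProduct]

@[simp]
lemma mulVecCLM_apply (A : Matrix (Fin n) (Fin n) ℝ) (w : Fin n → ℝ) :
    mulVecCLM A w = A *ᵥ w := by
  simp [mulVecCLM]

lemma dotCLM_injective : Function.Injective (dotCLM (n := n)) := fun v w h => by
  ext i
  simpa using congr($h (Pi.single i 1))

lemma dotCLM_add (v w : Fin n → ℝ) : dotCLM (v + w) = dotCLM v + dotCLM w := by
  ext; simp [add_dotProduct]

lemma dotCLM_sub (v w : Fin n → ℝ) : dotCLM (v - w) = dotCLM v - dotCLM w := by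
  ext; simp [sub_dotProduct]

lemma dotCLM_smul (c : ℝ) (v : Fin n → ℝ) : dotCLM (c • v) = c • dotCLM v := by
  ext; simp

lemma mulVecCLM_add (A B : Matrix (Fin n) (Fin n) ℝ) :
    mulVecCLM (A + B) = mulVecCLM A + mulVecCLM B := by
  ext; simp [add_mulVec]

lemma mulVecCLM_sub (A B : Matrix (Fin n) (Fin n) ℝ) :
    mulVecCLM (A - B) = mulVecCLM A - mulVecCLM B := by
  ext; simp [sub_mulVec]

lemma IsLocalMin.eq_zero_of_hasFDerivAt_dotCLM {F : (Fin n → ℝ) → ℝ} {g x₀ : Fin n → ℝ}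
    (hmin : IsLocalMin F x₀) (hF : HasFDerivAt F (dotCLM g) x₀) : g = 0 :=
  dotCLM_injective (by rw [hmin.hasFDerivAt_eq_zero hF]; ext; simp)

lemma IsLocalMin.dotProduct_mulVec_nonneg {F : (Fin n → ℝ) → ℝ} {G : (Fin n → ℝ) → Fin n → ℝ}
    {H : Matrix (Fin n) (Fin n) ℝ} {x₀ : Fin n → ℝ} (hmin : IsLocalMin F x₀)
    (hF : ∀ᶠ y in 𝓝 x₀, HasFDerivAt F (dotCLM (G y)) y) (hG : HasFDerivAt G (mulVecCLM H) x₀)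
    (v : Fin n → ℝ) : 0 ≤ v ⬝ᵥ (H *ᵥ v) := by
  have hGv : HasFDerivAt (fun y => dotCLM (G y) v) ((dotCLM v).comp (mulVecCLM H)) x₀ := by
    simpa only [Function.comp_def, dotCLM_apply, dotProduct_comm _ v] using
      (dotCLM v).hasFDerivAt.comp x₀ hG
  simpa using hmin.nonneg_of_hasFDerivAt_fderiv_apply hF v hGv

end DotCLM

section Coordinates

variable {n : ℕ}

lemma hasFDerivAt_sum_log {x : Fin n → ℝ} (hx : ∀ i, x i ≠ 0) :
    HasFDerivAt (fun y : Fin n → ℝ => ∑ i, Real.log (y i)) (dotCLM fun i => (x i)⁻¹) x := by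
  have h : ∀ i ∈ Finset.univ, HasFDerivAt (fun y : Fin n → ℝ => Real.log (y i))
      ((x i)⁻¹ • ContinuousLinearMap.proj i) x := fun i _ =>
    (hasFDerivAt_apply (𝕜 := ℝ) i x).log (hx i)
  refine (HasFDerivAt.fun_sum h).congr_fderiv ?_
  ext v
  simp [dotProduct]

lemma sum_log_le {x : Fin n → ℝ} {M : ℝ} (hx : ∀ j, 0 < x j) (hM : ∀ j, x j ≤ M) :
    ∑ j, Real.log (x j) ≤ n * Real.log M := by
  simpa using Finset.sum_le_sum fun j (_ : j ∈ Finset.univ) => Real.log_le_log (hx j) (hM j)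

lemma sum_log_le_log_add {x : Fin n → ℝ} {M : ℝ} (hx : ∀ j, 0 < x j) (hM : ∀ j, x j ≤ M)
    (hM1 : 1 ≤ M) (i : Fin n) : ∑ j, Real.log (x j) ≤ Real.log (x i) + n * Real.log M := by
  rw [← Finset.add_sum_erase _ _ (Finset.mem_univ i)]
  gcongr
  calc ∑ j ∈ Finset.univ.erase i, Real.log (x j)
      ≤ ∑ j ∈ Finset.univ.erase i, Real.log M :=
        Finset.sum_le_sum fun j _ => Real.log_le_log (hx j) (hM j)
    _ ≤ ∑ j, Real.log M :=
        Finset.sum_le_sum_of_subset_of_nonneg (Finset.erase_subset _ _)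
          fun _ _ _ => Real.log_nonneg hM1
    _ = n * Real.log M := by simp

lemma exists_one_le_forall_le_of_norm_sub_le (a : Fin n → ℝ) (r : ℝ) :
    ∃ M, 1 ≤ M ∧ ∀ x : Fin n → ℝ, ‖x - a‖ ≤ r → ∀ i, x i ≤ M := by
  refine ⟨‖a‖ + |r| + 1, by linarith [norm_nonneg a, abs_nonneg r], fun x hx i => ?_⟩
  have hxi : x i - a i ≤ r := (le_abs_self _).trans ((norm_le_pi_norm (x - a) i).trans hx)
  have hai : a i ≤ ‖a‖ := (le_abs_self _).trans (norm_le_pi_norm a i)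
  linarith [le_abs_self r]

end Coordinates

section Barrier

variable {n : ℕ}

noncomputable def sqDist (a x : Fin n → ℝ) : ℝ := ∑ i, (x i - a i) ^ 2

noncomputable def barrier (f : (Fin n → ℝ) → ℝ) (a : Fin n → ℝ) (μ : ℝ) (x : Fin n → ℝ) : ℝ :=
  f x + sqDist a x ^ 2 - μ * ∑ i, Real.log (x i)

noncomputable def barrierGrad (gradf : (Fin n → ℝ) → Fin n → ℝ) (a : Fin n → ℝ) (μ : ℝ)
    (x : Fin n → ℝ) : Fin n → ℝ :=
  gradf x + (4 * sqDist a x) • (x - a) - fun i => μ / x i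

noncomputable def barrierHess (hessf : (Fin n → ℝ) → Matrix (Fin n) (Fin n) ℝ) (a : Fin n → ℝ)
    (μ : ℝ) (x : Fin n → ℝ) : Matrix (Fin n) (Fin n) ℝ :=
  hessf x + ((8 : ℝ) • vecMulVec (x - a) (x - a) + (4 * sqDist a x) • 1)
    + diagonal fun i => μ / x i ^ 2

variable {f : (Fin n → ℝ) → ℝ} {gradf : (Fin n → ℝ) → Fin n → ℝ}
  {hessf : (Fin n → ℝ) → Matrix (Fin n) (Fin n) ℝ} {a x : Fin n → ℝ} {μ : ℝ}

lemma sqDist_nonneg (a x : Fin n → ℝ) : 0 ≤ sqDist a x := by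
  unfold sqDist; positivity

lemma hasFDerivAt_sqDist (a x : Fin n → ℝ) :
    HasFDerivAt (sqDist a) (dotCLM ((2 : ℝ) • (x - a))) x := by
  have h : ∀ i ∈ Finset.univ, HasFDerivAt (fun y : Fin n → ℝ => (y i - a i) ^ 2)
      ((2 * (x i - a i)) • ContinuousLinearMap.proj i) x := fun i _ => by
    simpa using ((hasFDerivAt_apply (𝕜 := ℝ) i x).sub_const (a i)).pow 2
  refine (HasFDerivAt.fun_sum h).congr_fderiv ?_
  ext v
  simp [dotProduct]

lemma continuous_sqDist (a : Fin n → ℝ) : Continuous (sqDist a) :=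
  continuous_iff_continuousAt.2 fun x => (hasFDerivAt_sqDist a x).continuousAt

lemma norm_sub_le_sqrt_sqDist (a x : Fin n → ℝ) : ‖x - a‖ ≤ √(sqDist a x) :=
  (pi_norm_le_iff_of_nonneg (Real.sqrt_nonneg _)).2 fun i => Real.abs_le_sqrt <|
    Finset.single_le_sum (f := fun j => (x j - a j) ^ 2) (fun _ _ => sq_nonneg _)
      (Finset.mem_univ i)

lemma hasFDerivAt_sqDist_sq (a x : Fin n → ℝ) :
    HasFDerivAt (fun y => sqDist a y ^ 2) (dotCLM ((4 * sqDist a x) • (x - a))) x := by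
  refine ((hasFDerivAt_sqDist a x).pow 2).congr_fderiv ?_
  rw [dotCLM_smul, dotCLM_smul]
  module

lemma continuousOn_barrier {s : Set (Fin n → ℝ)} (hf : ContinuousOn f s)
    (hs : ∀ x ∈ s, ∀ i, x i ≠ 0) (μ : ℝ) : ContinuousOn (barrier f a μ) s :=
  (hf.add ((continuous_sqDist a).pow 2).continuousOn).sub <| continuousOn_const.mul <|
    continuousOn_finsetSum _ fun i _ =>
      (continuous_apply i).continuousOn.log fun x hx => hs x hx i

lemma hasFDerivAt_barrier (hf : HasFDerivAt f (dotCLM (gradf x)) x) (hx : ∀ i, x i ≠ 0) :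
    HasFDerivAt (barrier f a μ) (dotCLM (barrierGrad gradf a μ x)) x := by
  refine ((hf.add (hasFDerivAt_sqDist_sq a x)).sub
    ((hasFDerivAt_sum_log hx).const_mul μ)).congr_fderiv ?_
  rw [barrierGrad, dotCLM_sub, dotCLM_add, ← dotCLM_smul]
  congr 2

lemma hasFDerivAt_sqDist_smul_sub (a x : Fin n → ℝ) :
    HasFDerivAt (fun y => (4 * sqDist a y) • (y - a))
      (mulVecCLM ((8 : ℝ) • vecMulVec (x - a) (x - a) + (4 * sqDist a x) • 1)) x := by
  refine (((hasFDerivAt_sqDist a x).const_mul 4).smul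
    ((hasFDerivAt_id x).sub_const a)).congr_fderiv ?_
  ext1 v
  simp only [_root_.add_apply, _root_.smul_apply, ContinuousLinearMap.id_apply,
    ContinuousLinearMap.smulRight_apply, dotCLM_apply, mulVecCLM_apply, add_mulVec, smul_mulVec,
    vecMulVec_mulVec, one_mulVec, op_smul_eq_smul, smul_dotProduct, smul_eq_mul, id_eq]
  module

lemma hasFDerivAt_div_apply (μ : ℝ) (hx : ∀ i, x i ≠ 0) :
    HasFDerivAt (fun (y : Fin n → ℝ) i => μ / y i)
      (mulVecCLM (-diagonal fun i => μ / x i ^ 2)) x := by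
  rw [hasFDerivAt_pi']
  intro i
  refine (((hasDerivAt_inv (hx i)).const_mul μ).comp_hasFDerivAt x
    (hasFDerivAt_apply i x)).congr_fderiv ?_
  ext v
  simp [mulVec_diagonal, div_eq_mul_inv]

lemma hasFDerivAt_barrierGrad (hg : HasFDerivAt gradf (mulVecCLM (hessf x)) x)
    (hx : ∀ i, x i ≠ 0) :
    HasFDerivAt (barrierGrad gradf a μ) (mulVecCLM (barrierHess hessf a μ x)) x := by
  refine ((hg.add (hasFDerivAt_sqDist_smul_sub a x)).sub
    (hasFDerivAt_div_apply μ hx)).congr_fderiv ?_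
  rw [barrierHess, ← sub_neg_eq_add _ (diagonal _), mulVecCLM_sub]
  simp only [mulVecCLM_add]

lemma dotProduct_mulVec_penaltyHess_le (a x v : Fin n → ℝ) :
    v ⬝ᵥ (((8 : ℝ) • vecMulVec (x - a) (x - a) + (4 * sqDist a x) • 1) *ᵥ v)
      ≤ 12 * sqDist a x * (v ⬝ᵥ v) := by
  have hCS : ((x - a) ⬝ᵥ v) ^ 2 ≤ sqDist a x * (v ⬝ᵥ v) := by
    simpa [dotProduct, sqDist, ← sq] using Finset.sum_mul_sq_le_sq_mul_sq Finset.univ (x - a) v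
  have hexp : v ⬝ᵥ (((8 : ℝ) • vecMulVec (x - a) (x - a) + (4 * sqDist a x) • 1) *ᵥ v)
      = 8 * ((x - a) ⬝ᵥ v) ^ 2 + 4 * sqDist a x * (v ⬝ᵥ v) := by
    simp only [add_mulVec, smul_mulVec, vecMulVec_mulVec, one_mulVec, dotProduct_add,
      dotProduct_smul, op_smul_eq_smul, dotProduct_comm v (x - a), smul_eq_mul]
    ring
  linarith

lemma IsLocalMin.gradf_sub_div_eq (hmin : IsLocalMin (barrier f a μ) x)
    (hf : HasFDerivAt f (dotCLM (gradf x)) x) (hx : ∀ i, x i ≠ 0) :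
    (gradf x - fun i => μ / x i) = -(4 * sqDist a x) • (x - a) := by
  have h := hmin.eq_zero_of_hasFDerivAt_dotCLM (hasFDerivAt_barrier hf hx)
  rw [barrierGrad] at h
  refine eq_of_sub_eq_zero ?_
  rw [← h]
  module

lemma IsLocalMin.dotProduct_mulVec_hessf_add_nonneg (hmin : IsLocalMin (barrier f a μ) x)
    (hf : ∀ᶠ y in 𝓝 x, HasFDerivAt f (dotCLM (gradf y)) y)
    (hg : HasFDerivAt gradf (mulVecCLM (hessf x)) x) (hx : ∀ i, x i ≠ 0)
    {δ : ℝ} (hδ : 12 * sqDist a x ≤ δ) (v : Fin n → ℝ) :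
    0 ≤ v ⬝ᵥ ((hessf x + diagonal (fun i => μ / x i ^ 2) + δ • 1) *ᵥ v) := by
  have hne : ∀ᶠ y in 𝓝 x, ∀ i, y i ≠ 0 :=
    eventually_all.2 fun i => (continuous_apply i).continuousAt.eventually_ne (hx i)
  have hH := hmin.dotProduct_mulVec_nonneg
    ((hf.and hne).mono fun y hy => hasFDerivAt_barrier hy.1 hy.2) (hasFDerivAt_barrierGrad hg hx) v
  have hpen := dotProduct_mulVec_penaltyHess_le a x v
  have hvv : 0 ≤ v ⬝ᵥ v := Finset.sum_nonneg fun i _ => mul_self_nonneg (v i)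
  rw [barrierHess] at hH
  simp only [add_mulVec, dotProduct_add, smul_mulVec, one_mulVec, dotProduct_smul,
    smul_eq_mul] at hH hpen ⊢
  linarith [mul_le_mul_of_nonneg_right hδ hvv]

lemma exists_pos_norm_sub_lt_and_lt (hcont : ContinuousOn f {x | ∀ i, 0 ≤ x i})
    (ha : ∀ i, 0 ≤ a i) {r η : ℝ} (hr : 0 < r) (hη : 0 < η) :
    ∃ z, (∀ i, 0 < z i) ∧ ‖z - a‖ < r ∧ f z + sqDist a z ^ 2 < f a + η := by
  set z : ℝ → Fin n → ℝ := fun c i => a i + c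
  have hza : Tendsto z (𝓝 0) (𝓝 a) := by
    simpa [z] using (continuous_pi fun i => continuous_const.add continuous_id).tendsto (0 : ℝ)
  have hzS : Tendsto z (𝓝[>] 0) (𝓝[{x | ∀ i, 0 ≤ x i}] a) :=
    tendsto_nhdsWithin_iff.2 ⟨hza.mono_left nhdsWithin_le_nhds,
      eventually_mem_nhdsWithin.mono fun c (hc : 0 < c) i => add_nonneg (ha i) hc.le⟩
  have hP : Tendsto (fun c => f (z c) + sqDist a (z c) ^ 2) (𝓝[>] 0) (𝓝 (f a)) := by
    simpa [sqDist] using ((hcont a ha).tendsto.comp hzS).add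
      ((((continuous_sqDist a).tendsto a).comp (hza.mono_left nhdsWithin_le_nhds)).pow 2)
  obtain ⟨c, hcP, hcr, hc⟩ := ((hP.eventually (gt_mem_nhds (lt_add_of_pos_right _ hη))).and
    (((hza.mono_left nhdsWithin_le_nhds).eventually (Metric.ball_mem_nhds a hr)).and
      self_mem_nhdsWithin)).exists
  exact ⟨z c, fun i => add_pos_of_nonneg_of_pos (ha i) hc, by rwa [← dist_eq_norm], hcP⟩

lemma exists_isLocalMin_barrier_of_lt (hcont : ContinuousOn f {x | ∀ i, 0 ≤ x i}) {r : ℝ}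
    (hr : 0 < r) (hfr : ∀ x, (∀ i, 0 ≤ x i) → ‖x - a‖ ≤ r → f a ≤ f x) {M : ℝ} (hM1 : 1 ≤ M)
    (hM : ∀ x : Fin n → ℝ, ‖x - a‖ ≤ r → ∀ i, x i ≤ M) {μ t : ℝ} (hμ : 0 < μ) (ht : 0 < t)
    {z : Fin n → ℝ} (hzt : ∀ i, t ≤ z i) (hzr : ‖z - a‖ ≤ r)
    (hz_lt_log : barrier f a μ z < f a - μ * (Real.log t + n * Real.log M))
    (hz_lt_pow : barrier f a μ z - f a + μ * (n * Real.log M) < r ^ 4) :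
    ∃ w, (∀ i, 0 < w i) ∧ sqDist a w ^ 2 ≤ barrier f a μ z - f a + μ * (n * Real.log M) ∧
      IsLocalMin (barrier f a μ) w := by
  set C := Metric.closedBall a r ∩ {x | ∀ i, t ≤ x i}
  have hCpos : ∀ x ∈ C, ∀ i, 0 < x i := fun x hx i => ht.trans_le (hx.2 i)
  have hCc : IsCompact C := (isCompact_closedBall a r).inter_right <| by
    simp only [Set.ofPred_forall]
    exact isClosed_iInter fun i => isClosed_le continuous_const (continuous_apply i)
  obtain ⟨w, hwC, hwmin⟩ := hCc.exists_isMinOn ⟨z, by rwa [← dist_eq_norm] at hzr, hzt⟩ <|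
    continuousOn_barrier (hcont.mono fun x hx i => (hCpos x hx i).le)
      (fun x hx i => (hCpos x hx i).ne') μ
  have hw0 := hCpos w hwC
  have hwr : ‖w - a‖ ≤ r := by simpa [dist_eq_norm] using hwC.1
  have hlow : f a + sqDist a w ^ 2 - μ * ∑ j, Real.log (w j) ≤ barrier f a μ z := by
    refine le_trans ?_ (hwmin ⟨by rwa [← dist_eq_norm] at hzr, hzt⟩)
    simp only [barrier]
    linarith [hfr w (fun i => (hw0 i).le) hwr]
  have hsq : sqDist a w ^ 2 ≤ barrier f a μ z - f a + μ * (n * Real.log M) := by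
    linarith [mul_le_mul_of_nonneg_left (sum_log_le hw0 (hM w hwr)) hμ.le]
  have hwr' : ‖w - a‖ < r := by
    refine (norm_sub_le_sqrt_sqDist a w).trans_lt ((Real.sqrt_lt' hr).2 ?_)
    exact lt_of_pow_lt_pow_left₀ 2 (by positivity) (by linarith)
  have hwt : ∀ i, t < w i := by
    intro i
    refine (hwC.2 i).lt_of_ne fun hi => ?_
    have hlog := sum_log_le_log_add hw0 (hM w hwr) hM1 i
    rw [← hi] at hlog
    linarith [mul_le_mul_of_nonneg_left hlog hμ.le, sq_nonneg (sqDist a w)]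
  have hU : IsOpen (Metric.ball a r ∩ {x | ∀ i, t < x i}) := Metric.isOpen_ball.inter <| by
    simp only [Set.ofPred_forall]
    exact isOpen_iInter_of_finite fun i => isOpen_lt continuous_const (continuous_apply i)
  refine ⟨w, hw0, hsq, hwmin.isLocalMin (Filter.mem_of_superset (hU.mem_nhds ⟨?_, hwt⟩) ?_)⟩
  · rwa [Metric.mem_ball, dist_eq_norm]
  · exact fun x hx => ⟨Metric.ball_subset_closedBall hx.1, fun i => (hx.2 i).le⟩

lemma exists_isLocalMin_barrier (hcont : ContinuousOn f {x | ∀ i, 0 ≤ x i}) (ha : ∀ i, 0 ≤ a i)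
    (hmin : IsLocalMinOn f {x | ∀ i, 0 ≤ x i} a) {η : ℝ} (hη : 0 < η) :
    ∃ μ w, 0 < μ ∧ μ ≤ η ∧ (∀ i, 0 < w i) ∧ sqDist a w ≤ η ∧ IsLocalMin (barrier f a μ) w := by
  obtain ⟨r, hr, hball⟩ :=
    (nhdsWithin_hasBasis Metric.nhds_basis_closedBall _).mem_iff.1 hmin
  have hfr : ∀ x, (∀ i, 0 ≤ x i) → ‖x - a‖ ≤ r → f a ≤ f x := fun x hx hxr =>
    hball ⟨by rwa [Metric.mem_closedBall, dist_eq_norm], hx⟩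
  obtain ⟨M, hM1, hM⟩ := exists_one_le_forall_le_of_norm_sub_le a r
  set ρ := min η (r ^ 2)
  have hρ : 0 < ρ := by positivity
  obtain ⟨z, hz0, hzr, hzP⟩ :=
    exists_pos_norm_sub_lt_and_lt hcont ha hr (by positivity : 0 < ρ ^ 2 / 2)
  obtain ⟨μ, hμ, hμη, hμA⟩ := exists_pos_le_mul_le (A := |∑ i, Real.log (z i)| + n * Real.log M)
    (by have := Real.log_nonneg hM1; positivity) (by positivity : 0 < ρ ^ 2 / 2) hη
  have hB : barrier f a μ z - f a + μ * (n * Real.log M) < ρ ^ 2 := by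
    have := mul_le_mul_of_nonneg_left (neg_abs_le (∑ i, Real.log (z i))) hμ.le
    simp only [barrier]
    linarith
  -- `-μ log t → ∞` as `t → 0⁺`, which will keep the minimizer off the faces `xᵢ = t`
  obtain ⟨t, hlogt, hzt, ht⟩ := ((Real.tendsto_log_nhdsGT_zero.eventually
    (eventually_lt_atBot ((f a - barrier f a μ z) / μ - n * Real.log M))).and
    ((eventually_all.2 fun i => Ioo_mem_nhdsGT (hz0 i)).and self_mem_nhdsWithin)).exists
  have hz_lt_log : barrier f a μ z < f a - μ * (Real.log t + n * Real.log M) := by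
    rw [lt_sub_iff_add_lt, lt_div_iff₀ hμ] at hlogt
    linarith
  obtain ⟨w, hw0, hsq, hloc⟩ := exists_isLocalMin_barrier_of_lt hcont hr hfr hM1 hM hμ ht
    (fun i => (hzt i).2.le) hzr.le hz_lt_log (hB.trans_le (by
      rw [show r ^ 4 = (r ^ 2) ^ 2 by ring]; gcongr; exact min_le_right _ _))
  exact ⟨μ, w, hμ, hμη, hw0, (lt_of_pow_lt_pow_left₀ 2 hρ.le (hsq.trans_lt hB)).le.trans
    (min_le_left _ _), hloc⟩

end Barrier

theorem stmt0_general {n : ℕ}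
    (f : (Fin n → ℝ) → ℝ)
    (gradf : (Fin n → ℝ) → (Fin n → ℝ))
    (hessf : (Fin n → ℝ) → Matrix (Fin n) (Fin n) ℝ)
    (hcont : ContinuousOn f {x : Fin n → ℝ | ∀ i, 0 ≤ x i})
    (hgrad : ∀ y : Fin n → ℝ, (∀ i, 0 < y i) → HasFDerivAt f (dotCLM (gradf y)) y)
    (hhess : ∀ y : Fin n → ℝ, (∀ i, 0 < y i) → HasFDerivAt gradf (mulVecCLM (hessf y)) y)
    (xstar : Fin n → ℝ) (hxstar : ∀ i, 0 ≤ xstar i)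
    (hmin : IsLocalMinOn f {x : Fin n → ℝ | ∀ i, 0 ≤ x i} xstar) :
    ∃ (xs ss θs : ℕ → Fin n → ℝ) (δs : ℕ → ℝ),
      (∀ k i, 0 < xs k i) ∧
      Tendsto xs atTop (𝓝 xstar) ∧
      (∀ k i, 0 ≤ ss k i) ∧
      (∀ k i, 0 ≤ θs k i) ∧
      (∀ k, 0 < δs k) ∧
      Tendsto δs atTop (𝓝 0) ∧
      Tendsto (fun k => gradf (xs k) - ss k) atTop (𝓝 (0 : Fin n → ℝ)) ∧
      (∀ i, Tendsto (fun k => min (xs k i) 1 * ss k i) atTop (𝓝 (0 : ℝ))) ∧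
      (∀ k, ∀ v : Fin n → ℝ,
        0 ≤ v ⬝ᵥ ((hessf (xs k) + Matrix.diagonal (θs k)
          + δs k • (1 : Matrix (Fin n) (Fin n) ℝ)) *ᵥ v)) ∧
      (∀ i, Tendsto (fun k => (min (xs k i) 1)^2 * θs k i) atTop (𝓝 (0 : ℝ))) := by
  choose μ w hμ hμle hw hS2 hloc using fun k : ℕ =>
    exists_isLocalMin_barrier hcont hxstar hmin (Nat.one_div_pos_of_nat (n := k))
  have hμ0 : Tendsto μ atTop (𝓝 0) :=
    squeeze_zero (fun k => (hμ k).le) hμle tendsto_one_div_add_atTop_nhds_zero_nat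
  have hS20 : Tendsto (fun k => sqDist xstar (w k)) atTop (𝓝 0) :=
    squeeze_zero (fun k => sqDist_nonneg _ _) hS2 tendsto_one_div_add_atTop_nhds_zero_nat
  have hw0 : Tendsto (fun k => w k - xstar) atTop (𝓝 0) :=
    squeeze_zero_norm (fun k => norm_sub_le_sqrt_sqDist _ _) (by simpa using hS20.sqrt)
  have hgrad_near : ∀ k, ∀ᶠ y in 𝓝 (w k), HasFDerivAt f (dotCLM (gradf y)) y := fun k =>
    (eventually_all.2 fun i =>
      (continuous_apply i).continuousAt.eventually_const_lt (hw k i)).mono hgrad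
  refine ⟨w, fun k i => μ k / w k i, fun k i => μ k / w k i ^ 2,
    fun k => 12 * sqDist xstar (w k) + μ k, hw, tendsto_sub_nhds_zero_iff.1 hw0,
    fun k i => div_nonneg (hμ k).le (hw k i).le, fun k i => div_nonneg (hμ k).le (by positivity),
    fun k => add_pos_of_nonneg_of_pos (by have := sqDist_nonneg xstar (w k); positivity) (hμ k),
    by simpa using (hS20.const_mul 12).add hμ0, ?_, fun i => ?_, fun k => ?_, fun i => ?_⟩
  · simp_rw [fun k => (hloc k).gradf_sub_div_eq (hgrad _ (hw k)) fun i => (hw k i).ne']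
    simpa using (hS20.const_mul 4).neg.smul hw0
  · simpa using tendsto_min_one_pow_mul_div 1 (fun k => hw k i) (fun k => (hμ k).le) hμ0
  · exact (hloc k).dotProduct_mulVec_hessf_add_nonneg (hgrad_near k) (hhess _ (hw k))
      (fun i => (hw k i).ne') (le_add_of_nonneg_right (hμ k).le)
  · exact tendsto_min_one_pow_mul_div 2 (fun k => hw k i) (fun k => (hμ k).le) hμ0

/-- if `f` is continuous on the nonnegative orthant and twice continuously
differentiable on its interior (with gradient `gradf` and Hessian `hessf` there),
and `xstar ≥ 0` is a local minimizer of `f` over the nonnegative orthant, then there exist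
sequences `xs > 0` with `xs → xstar`, `ss ≥ 0`, `θs ≥ 0`, and scalars `δs > 0` with `δs → 0`
such that `∇f(xᵏ) − sᵏ → 0`, `min(xᵢᵏ,1)·sᵢᵏ → 0` for each `i`,
`∇²f(xᵏ) + diag(θᵏ) + δₖ I ⪰ 0` for all `k`, and `min(xᵢᵏ,1)²·θᵢᵏ → 0` for each `i`. -/
theorem stmt0 {n : ℕ}
    (f : (Fin n → ℝ) → ℝ)
    (gradf : (Fin n → ℝ) → (Fin n → ℝ))
    (hessf : (Fin n → ℝ) → Matrix (Fin n) (Fin n) ℝ)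
    (hcont : ContinuousOn f {x : Fin n → ℝ | ∀ i, 0 ≤ x i})
    (hgrad : ∀ y : Fin n → ℝ, (∀ i, 0 < y i) → HasFDerivAt f (dotCLM (gradf y)) y)
    (hhess : ∀ y : Fin n → ℝ, (∀ i, 0 < y i) → HasFDerivAt gradf (mulVecCLM (hessf y)) y)
    (hhesscont : ContinuousOn hessf {x : Fin n → ℝ | ∀ i, 0 < x i})
    (xstar : Fin n → ℝ) (hxstar : ∀ i, 0 ≤ xstar i)
    (hmin : IsLocalMinOn f {x : Fin n → ℝ | ∀ i, 0 ≤ x i} xstar) :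
    ∃ (xs ss θs : ℕ → Fin n → ℝ) (δs : ℕ → ℝ),
      (∀ k i, 0 < xs k i) ∧
      Tendsto xs atTop (𝓝 xstar) ∧
      (∀ k i, 0 ≤ ss k i) ∧
      (∀ k i, 0 ≤ θs k i) ∧
      (∀ k, 0 < δs k) ∧
      Tendsto δs atTop (𝓝 0) ∧
      Tendsto (fun k => gradf (xs k) - ss k) atTop (𝓝 (0 : Fin n → ℝ)) ∧
      (∀ i, Tendsto (fun k => min (xs k i) 1 * ss k i) atTop (𝓝 (0 : ℝ))) ∧
      (∀ k, ∀ v : Fin n → ℝ,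
        0 ≤ v ⬝ᵥ ((hessf (xs k) + Matrix.diagonal (θs k)
          + δs k • (1 : Matrix (Fin n) (Fin n) ℝ)) *ᵥ v)) ∧
      (∀ i, Tendsto (fun k => (min (xs k i) 1)^2 * θs k i) atTop (𝓝 (0 : ℝ))) :=
  stmt0_general f gradf hessf hcont hgrad hhess xstar hxstar hmin
end

section
/- Let x ∈ ℝⁿ with x > 0 componentwise, let g ∈ ℝⁿ and let H be a symmetric n×n real matrix, and let εg > 0 and εH > 0. Suppose that (i) g ≥ −εg·e componentwise, (ii) ‖X̄g‖∞ ≤ εg, and (iii) X̄HX̄ + εH·I is positive semidefinite. Then there exist vectors s ∈ ℝⁿ and θ ∈ ℝⁿ with s ≥ 0 and θ ≥ 0 componentwise such that: (a) ‖g − s‖∞ ≤ εg; (b) ‖X̄s‖∞ ≤ εg; (c) H + diag(θ) + εH·I is positive semidefinite; and (d) ‖X̄²θ‖∞ ≤ εH. -/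
/-!
Take `s = max(g, 0)` and `θᵢ = εH / x̄ᵢ² − εH`. The bounds on `s` are coordinatewise, since
`|gᵢ − max(gᵢ, 0)| = max(−gᵢ, 0)` and `|max(gᵢ, 0)| ≤ |gᵢ|`, and `x̄ᵢ² θᵢ = εH (1 − x̄ᵢ²)` lies
in `[0, εH]` because `0 < x̄ᵢ ≤ 1`. For the curvature condition, `θ + εH e = εH x̄⁻²`, and the
quadratic form of `X̄HX̄ + εH I` at `X̄⁻¹w` equals that of `H + εH X̄⁻²` at `w`.
-/

open Matrix

section QuadraticForm

variable {ι R : Type*} [Fintype ι] [DecidableEq ι]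

theorem dotProduct_diagonal_mulVec [CommSemiring R] (d v : ι → R) :
    v ⬝ᵥ (diagonal d *ᵥ v) = ∑ i, d i * v i ^ 2 := by
  simp only [dotProduct, mulVec_diagonal]
  exact Finset.sum_congr rfl fun i _ => by ring

theorem dotProduct_diagonal_mul_mul_diagonal_mulVec [CommSemiring R] (d : ι → R)
    (A : Matrix ι ι R) (v : ι → R) :
    v ⬝ᵥ ((diagonal d * A * diagonal d) *ᵥ v) = (d * v) ⬝ᵥ (A *ᵥ (d * v)) := by
  have hdv : diagonal d *ᵥ v = d * v := funext (mulVec_diagonal d v)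
  have hvd : v ᵥ* diagonal d = d * v := funext fun i => by rw [vecMul_diagonal, mul_comm]; rfl
  rw [← mulVec_mulVec, ← mulVec_mulVec, hdv, dotProduct_mulVec v (diagonal d), hvd]

theorem nonneg_dotProduct_add_diagonal_mulVec_of_diagonal_conj [Field R] [PartialOrder R]
    {A : Matrix ι ι R} {d : ι → R} (hd : ∀ i, d i ≠ 0) {c : R}
    (h : ∀ v, 0 ≤ v ⬝ᵥ ((diagonal d * A * diagonal d + c • 1) *ᵥ v)) (w : ι → R) :
    0 ≤ w ⬝ᵥ ((A + diagonal fun i => c / d i ^ 2) *ᵥ w) := by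
  have hdw : d * (w / d) = w := funext fun i => mul_div_cancel₀ (w i) (hd i)
  have hw := h (w / d)
  rw [add_mulVec, dotProduct_add, dotProduct_diagonal_mul_mul_diagonal_mulVec, hdw,
    smul_one_eq_diagonal, dotProduct_diagonal_mulVec] at hw
  rw [add_mulVec, dotProduct_add, dotProduct_diagonal_mulVec]
  convert hw using 2
  exact Finset.sum_congr rfl fun i _ => by simp only [Pi.div_apply]; ring

end QuadraticForm

section Scalar

variable {α : Type*} [LinearOrder α]

theorem abs_sub_max_zero_le [AddCommGroup α] [IsOrderedAddMonoid α] {a ε : α} (h : -ε ≤ a) (hε : 0 ≤ ε) : |a - max a 0| ≤ ε := by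
  rcases le_total a 0 with ha | ha
  · rw [max_eq_right ha, sub_zero, abs_le]
    exact ⟨h, ha.trans hε⟩
  · rwa [max_eq_left ha, sub_self, abs_zero]

theorem abs_mul_max_zero_le [Ring α] [IsOrderedRing α] (c a : α) : |c * max a 0| ≤ |c * a| := by
  rcases le_total a 0 with ha | ha
  · rw [max_eq_right ha, mul_zero, abs_zero]
    exact abs_nonneg _
  · rw [max_eq_left ha]

theorem abs_mul_div_sub_self_le [Field α] [IsStrictOrderedRing α] {b ε : α} (hb : 0 < b) (hb1 : b ≤ 1) (hε : 0 ≤ ε) :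
    |b * (ε / b - ε)| ≤ ε := by
  have hθ : b * (ε / b - ε) = ε * (1 - b) := by field_simp
  rw [hθ, abs_of_nonneg (mul_nonneg hε (sub_nonneg.2 hb1))]
  nlinarith

end Scalar

theorem stmt1_general {n : ℕ} (x g : Fin n → ℝ) (H : Matrix (Fin n) (Fin n) ℝ)
    (εg εH : ℝ) (hεg : 0 < εg) (hεH : 0 < εH)
    (hx : ∀ i, 0 < x i)
    (h1 : ∀ i, -εg ≤ g i)
    (h2 : ‖(fun i => min (x i) 1 * g i : Fin n → ℝ)‖ ≤ εg)
    (h3 : ∀ v : Fin n → ℝ,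
      0 ≤ v ⬝ᵥ ((Matrix.diagonal (fun i => min (x i) 1) * H
          * Matrix.diagonal (fun i => min (x i) 1)
          + εH • (1 : Matrix (Fin n) (Fin n) ℝ)) *ᵥ v)) :
    ∃ s θ : Fin n → ℝ,
      (∀ i, 0 ≤ s i) ∧ (∀ i, 0 ≤ θ i) ∧
      ‖g - s‖ ≤ εg ∧
      ‖(fun i => min (x i) 1 * s i : Fin n → ℝ)‖ ≤ εg ∧
      (∀ v : Fin n → ℝ,
        0 ≤ v ⬝ᵥ ((H + Matrix.diagonal θ + εH • (1 : Matrix (Fin n) (Fin n) ℝ)) *ᵥ v)) ∧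
      ‖(fun i => (min (x i) 1)^2 * θ i : Fin n → ℝ)‖ ≤ εH := by
  have hxb_pos i : 0 < min (x i) 1 := lt_min (hx i) one_pos
  have hxb_sq_pos i : 0 < min (x i) 1 ^ 2 := pow_pos (hxb_pos i) 2
  have hxb_sq_le i : min (x i) 1 ^ 2 ≤ 1 := pow_le_one₀ (hxb_pos i).le (min_le_right _ _)
  refine ⟨fun i => max (g i) 0, fun i => εH / min (x i) 1 ^ 2 - εH, fun i => le_max_right _ _,
    fun i => sub_nonneg.2 (le_div_self hεH.le (hxb_sq_pos i) (hxb_sq_le i)), ?_, ?_, ?_, ?_⟩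
  · exact (pi_norm_le_iff_of_nonneg hεg.le).2 fun i => abs_sub_max_zero_le (h1 i) hεg.le
  · exact (pi_norm_le_iff_of_nonneg hεg.le).2 fun i =>
      (abs_mul_max_zero_le _ _).trans ((norm_le_pi_norm _ i).trans h2)
  · have hshift : H + diagonal (fun i => εH / min (x i) 1 ^ 2 - εH) + εH • 1
        = H + diagonal fun i => εH / min (x i) 1 ^ 2 := by
      rw [add_assoc, smul_one_eq_diagonal, diagonal_add]
      simp only [sub_add_cancel]
    rw [hshift]
    exact nonneg_dotProduct_add_diagonal_mulVec_of_diagonal_conj (fun i => (hxb_pos i).ne') h3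
  · exact (pi_norm_le_iff_of_nonneg hεH.le).2 fun i =>
      abs_mul_div_sub_self_le (hxb_sq_pos i) (hxb_sq_le i) hεH.le

/-- for `x > 0`, `g` and symmetric `H` satisfying the approximate optimality
conditions `g ≥ −εg e`, `‖X̄g‖∞ ≤ εg`, `X̄HX̄ + εH I ⪰ 0`, there exist nonnegative
multipliers `s, θ` with `‖g − s‖∞ ≤ εg`, `‖X̄s‖∞ ≤ εg`, `H + diag(θ) + εH I ⪰ 0`, and
`‖X̄²θ‖∞ ≤ εH`. Here `X̄ = diag(min(xᵢ,1))`, `‖·‖` on `Fin n → ℝ` is the max-norm, and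
positive semidefiniteness is expressed via the quadratic form. -/
theorem stmt1 {n : ℕ} (x g : Fin n → ℝ) (H : Matrix (Fin n) (Fin n) ℝ) (hH : H.IsSymm)
    (εg εH : ℝ) (hεg : 0 < εg) (hεH : 0 < εH)
    (hx : ∀ i, 0 < x i)
    (h1 : ∀ i, -εg ≤ g i)
    (h2 : ‖(fun i => min (x i) 1 * g i : Fin n → ℝ)‖ ≤ εg)
    (h3 : ∀ v : Fin n → ℝ,
      0 ≤ v ⬝ᵥ ((Matrix.diagonal (fun i => min (x i) 1) * H
          * Matrix.diagonal (fun i => min (x i) 1)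
          + εH • (1 : Matrix (Fin n) (Fin n) ℝ)) *ᵥ v)) :
    ∃ s θ : Fin n → ℝ,
      (∀ i, 0 ≤ s i) ∧ (∀ i, 0 ≤ θ i) ∧
      ‖g - s‖ ≤ εg ∧
      ‖(fun i => min (x i) 1 * s i : Fin n → ℝ)‖ ≤ εg ∧
      (∀ v : Fin n → ℝ,
        0 ≤ v ⬝ᵥ ((H + Matrix.diagonal θ + εH • (1 : Matrix (Fin n) (Fin n) ℝ)) *ᵥ v)) ∧
      ‖(fun i => (min (x i) 1)^2 * θ i : Fin n → ℝ)‖ ≤ εH :=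
  stmt1_general x g H εg εH hεg hεH hx h1 h2 h3
end

section
/- Let x ∈ ℝⁿ with x > 0 componentwise, let g ∈ ℝⁿ, let εg > 0 and set μ = εg/4. If either there exists a coordinate i with gᵢ < −εg, or ‖X̄g‖∞ > εg, then ‖X̄g − μ·X̄X⁻¹e‖ ≥ μ, where ‖·‖ denotes the Euclidean norm. -/
/-!
Write `vᵢ = x̄ᵢgᵢ − μ·x̄ᵢ/xᵢ`; since `‖v‖ ≥ |vᵢ|`, one good coordinate suffices. Both factors
`x̄ᵢ` and `x̄ᵢ/xᵢ` lie in `(0, 1]` and one of them equals `1`. If `gᵢ < −εg ≤ −μ`, then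
`vᵢ ≤ −μ(x̄ᵢ + x̄ᵢ/xᵢ) ≤ −μ`. If `|x̄ᵢgᵢ| > εg`, then `|vᵢ| ≥ εg − μ = 3μ`.
-/

noncomputable def euclNorm {n : ℕ} (v : Fin n → ℝ) : ℝ := Real.sqrt (∑ i, (v i)^2)

lemma abs_le_euclNorm {n : ℕ} (v : Fin n → ℝ) (i : Fin n) : |v i| ≤ euclNorm v :=
  Real.abs_le_sqrt <| Finset.single_le_sum (f := fun j => v j ^ 2)
    (fun j _ => sq_nonneg (v j)) (Finset.mem_univ i)

section Coordinate

variable {t : ℝ}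

lemma min_one_div_self_le_one (ht : 0 < t) : min t 1 / t ≤ 1 :=
  (div_le_one ht).2 (min_le_left t 1)

lemma one_le_min_one_add_min_one_div_self (ht : 0 < t) : 1 ≤ min t 1 + min t 1 / t := by
  rcases le_total t 1 with hle | hge
  · rw [min_eq_left hle, div_self ht.ne']
    linarith
  · rw [min_eq_right hge]
    linarith [div_pos one_pos ht]

lemma min_one_mul_sub_le_neg (ht : 0 < t) {g μ : ℝ} (hμ : 0 ≤ μ) (hg : g ≤ -μ) :
    min t 1 * g - μ * (min t 1 / t) ≤ -μ := by
  have hmin : 0 ≤ min t 1 := (lt_min ht one_pos).le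
  have hgμ : min t 1 * g ≤ min t 1 * -μ := mul_le_mul_of_nonneg_left hg hmin
  nlinarith [one_le_min_one_add_min_one_div_self ht]

lemma abs_min_one_mul_sub_le (ht : 0 < t) (g : ℝ) {μ : ℝ} (hμ : 0 ≤ μ) :
    |min t 1 * g| - μ ≤ |min t 1 * g - μ * (min t 1 / t)| := by
  have hd : |μ * (min t 1 / t)| ≤ μ := by
    rw [abs_of_nonneg (mul_nonneg hμ (div_nonneg (lt_min ht one_pos).le ht.le))]
    exact mul_le_of_le_one_right hμ (min_one_div_self_le_one ht)
  linarith [abs_sub_abs_le_abs_sub (min t 1 * g) (μ * (min t 1 / t))]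

end Coordinate

/-- for `x > 0`, `g ∈ ℝⁿ`, `εg > 0` and `μ = εg/4`, if some coordinate
satisfies `gᵢ < −εg` or `‖X̄g‖∞ > εg`, then `‖X̄g − μ X̄X⁻¹e‖ ≥ μ` in the Euclidean
norm. The `i`-th component of `X̄g − μ X̄X⁻¹e` is `min(xᵢ,1)·gᵢ − μ·min(xᵢ,1)/xᵢ`,
and `‖·‖` on `Fin n → ℝ` is the max-norm. -/
theorem stmt2 {n : ℕ} (x g : Fin n → ℝ) (hx : ∀ i, 0 < x i)
    (εg : ℝ) (hεg : 0 < εg) (μ : ℝ) (hμ : μ = εg / 4)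
    (h : (∃ i, g i < -εg) ∨ εg < ‖(fun i => min (x i) 1 * g i : Fin n → ℝ)‖) :
    μ ≤ euclNorm (fun i => min (x i) 1 * g i - μ * (min (x i) 1 / x i)) := by
  have hμ0 : 0 ≤ μ := by linarith
  suffices ∃ i, μ ≤ |min (x i) 1 * g i - μ * (min (x i) 1 / x i)| by
    obtain ⟨i, hi⟩ := this
    exact hi.trans (abs_le_euclNorm (fun j => min (x j) 1 * g j - μ * (min (x j) 1 / x j)) i)
  rcases h with ⟨i, hi⟩ | hnorm
  · refine ⟨i, ?_⟩
    have := min_one_mul_sub_le_neg (hx i) hμ0 (g := g i) (by linarith)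
    exact le_abs.2 (Or.inr (by linarith))
  · obtain ⟨i, hi⟩ : ∃ i, εg < |min (x i) 1 * g i| := by
      simpa using (pi_norm_le_iff_of_nonneg hεg.le).not.1 hnorm.not_ge
    exact ⟨i, by linarith [abs_min_one_mul_sub_le (hx i) (g i) hμ0]⟩
end

section
/- Let β ∈ [0, 1) and let y ∈ ℝ satisfy |y| ≤ β. Then −log(1 + y) ≤ −y + y²/2 + |y|³·(2 − β)/(6(1 − β)²). -/
/-!
For `y ≥ 0` the bound `log (1 + y) ≥ 2y/(y + 2)` already beats `y - y²/2`.
For `y = -x < 0` expand `-log (1 - x) = ∑ xⁿ⁺¹/(n + 1)` and bound every term of the tail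
`n ≥ 2` by `xⁿ⁺¹/3`, which leaves the geometric remainder `x³/(3(1 - x))`; finally
`1/(3(1 - x)) ≤ 1/(3(1 - β)) ≤ (2 - β)/(6(1 - β)²)` because `2(1 - β) ≤ 2 - β`.
-/

open Real

lemma sub_sq_div_two_le_log_one_add {x : ℝ} (hx : 0 ≤ x) : x - x ^ 2 / 2 ≤ log (1 + x) :=
  calc x - x ^ 2 / 2 ≤ 2 * x / (x + 2) := by
        rw [le_div_iff₀ (by positivity)]
        nlinarith [pow_nonneg hx 3]
    _ ≤ log (1 + x) := le_log_one_add_of_nonneg hx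

lemma neg_log_one_sub_le {x : ℝ} (hx0 : 0 ≤ x) (hx1 : x < 1) :
    -log (1 - x) ≤ x + x ^ 2 / 2 + x ^ 3 / (3 * (1 - x)) := by
  have hseries := hasSum_pow_div_log_of_abs_lt_one (abs_lt.mpr ⟨by linarith, hx1⟩)
  have htail := (hasSum_nat_add_iff' 2).mpr hseries
  have hgeom : HasSum (fun n : ℕ => x ^ 3 / 3 * x ^ n) (x ^ 3 / 3 * (1 - x)⁻¹) :=
    (hasSum_geometric_of_lt_one hx0 hx1).mul_left _
  have hterm : ∀ n : ℕ, x ^ (n + 2 + 1) / ((n + 2 : ℕ) + 1 : ℝ) ≤ x ^ 3 / 3 * x ^ n := by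
    intro n
    rw [div_mul_eq_mul_div, ← pow_add, add_comm 3 n]
    push_cast
    exact div_le_div_of_nonneg_left (by positivity) (by norm_num) (by linarith)
  have hle := hasSum_le hterm htail hgeom
  norm_num [Finset.sum_range_succ] at hle
  rw [← div_eq_mul_inv, div_div] at hle
  linarith

lemma pow_three_div_le_of_le {x β : ℝ} (hx0 : 0 ≤ x) (hxβ : x ≤ β) (hβ1 : β < 1) :
    x ^ 3 / (3 * (1 - x)) ≤ x ^ 3 * (2 - β) / (6 * (1 - β) ^ 2) :=
  calc x ^ 3 / (3 * (1 - x)) ≤ x ^ 3 / (3 * (1 - β)) := by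
        gcongr
    _ = x ^ 3 * (2 * (1 - β)) / (6 * (1 - β) ^ 2) := by
        field_simp [(by linarith : (1 - β) ≠ 0)]
        ring
    _ ≤ x ^ 3 * (2 - β) / (6 * (1 - β) ^ 2) := by
        gcongr
        linarith [hx0.trans hxβ]

/-- for `β ∈ [0,1)` and `|y| ≤ β`,
`−log(1+y) ≤ −y + y²/2 + |y|³(2−β)/(6(1−β)²)`. -/
theorem stmt3 (β y : ℝ) (hβ : β ∈ Set.Ico (0:ℝ) 1) (hy : |y| ≤ β) :
    -Real.log (1 + y) ≤ -y + y^2/2 + |y|^3 * (2 - β) / (6 * (1 - β)^2) := by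
  obtain ⟨hβ0, hβ1⟩ := hβ
  rcases le_or_gt 0 y with hy0 | hy0
  · have hrem : 0 ≤ |y| ^ 3 * (2 - β) / (6 * (1 - β) ^ 2) := by
      have : 0 ≤ 2 - β := by linarith
      positivity
    linarith [sub_sq_div_two_le_log_one_add hy0]
  · obtain ⟨x, rfl⟩ : ∃ x, y = -x := ⟨-y, (neg_neg y).symm⟩
    have hx0 : 0 ≤ x := by linarith
    rw [abs_neg, abs_of_nonneg hx0] at hy ⊢
    have hlog := neg_log_one_sub_le hx0 (hy.trans_lt hβ1)
    have hrem := pow_three_div_le_of_le hx0 hy hβ1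
    rw [← sub_eq_add_neg, neg_sq]
    linarith
end

section
/- Let x ∈ ℝⁿ with x > 0 componentwise, let μ > 0, and let w ∈ ℝⁿ. If ‖X̄w − μ·X̄X⁻¹e‖∞ < μ, then wᵢ > −μ for every coordinate i = 1,…,n. -/
/-! For `x ≥ 1` the coordinate bound reads `w - μ / x > -μ`, and `μ / x ≥ 0`; for `x < 1` it
reads `x w - μ > -μ`, so `w > 0`. -/

lemma neg_lt_of_neg_lt_min_one_mul_sub {x w μ : ℝ} (hx : 0 < x) (hμ : 0 ≤ μ)
    (h : -μ < min x 1 * w - μ * (min x 1 / x)) : -μ < w := by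
  rcases le_total 1 x with h1 | h1
  · rw [min_eq_right h1] at h
    have : 0 ≤ μ * (1 / x) := by positivity
    linarith
  · rw [min_eq_left h1, div_self hx.ne', mul_one] at h
    have hw : 0 < w := pos_of_mul_pos_right (by linarith) hx.le
    linarith

/-- for `x > 0`, `μ > 0` and `w ∈ ℝⁿ`, if `‖X̄w − μX̄X⁻¹e‖∞ < μ` then
`wᵢ > −μ` for every coordinate `i`. The `i`-th component of `X̄w − μX̄X⁻¹e` is
`min(xᵢ,1)·wᵢ − μ·min(xᵢ,1)/xᵢ`, and `‖·‖` on `Fin n → ℝ` is the max-norm. -/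
theorem stmt9 {n : ℕ} (x w : Fin n → ℝ) (hx : ∀ i, 0 < x i) (μ : ℝ) (hμ : 0 < μ)
    (h : ‖(fun i => min (x i) 1 * w i - μ * (min (x i) 1 / x i) : Fin n → ℝ)‖ < μ) :
    ∀ i, -μ < w i := by
  intro i
  have hi := (norm_le_pi_norm _ i).trans_lt h
  rw [Real.norm_eq_abs, abs_lt] at hi
  exact neg_lt_of_neg_lt_min_one_mul_sub (hx i) hμ.le hi.1
end

section
/- Let x ∈ ℝⁿ with x > 0 componentwise, let β ∈ (0, 1), and let d ∈ ℝⁿ satisfy ‖X⁻¹X̄d‖∞ ≤ β. Let x⁺ = x + X̄d. Then for every coordinate i, min(x⁺ᵢ, 1) < 2·min(xᵢ, 1); consequently, for every vector w ∈ ℝⁿ, ‖X̄⁺w‖∞ ≤ 2‖X̄w‖∞, where X̄⁺ = diag(min(x⁺₁,1),…,min(x⁺ₙ,1)). -/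
/-! Coordinatewise, `x⁺ᵢ = xᵢ (1 + tᵢ)` with `tᵢ = (x̄ᵢ / xᵢ) dᵢ` and `|tᵢ| ≤ β < 1`, so
`0 < x⁺ᵢ < 2 xᵢ`. Hence `min(x⁺ᵢ, 1) < min(2 xᵢ, 2) = 2 min(xᵢ, 1)`, and positivity of `x⁺`
turns this into `|min(x⁺ᵢ, 1) wᵢ| ≤ 2 |min(xᵢ, 1) wᵢ|`, which passes to the max-norm. -/

lemma pi_norm_le_mul_of_forall_norm_le {ι : Type*} [Fintype ι] {E F : ι → Type*}
    [∀ i, SeminormedAddGroup (E i)] [∀ i, SeminormedAddGroup (F i)]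
    {f : ∀ i, E i} {g : ∀ i, F i} {c : ℝ} (hc : 0 ≤ c) (h : ∀ i, ‖f i‖ ≤ c * ‖g i‖) :
    ‖f‖ ≤ c * ‖g‖ :=
  (pi_norm_le_iff_of_nonneg (by positivity)).2 fun i =>
    (h i).trans (mul_le_mul_of_nonneg_left (norm_le_pi_norm g i) hc)

lemma abs_mul_lt_of_abs_div_mul_le {x m d β : ℝ} (hx : 0 < x) (h : |m / x * d| ≤ β)
    (hβ : β < 1) : |m * d| < x := by
  rw [div_mul_eq_mul_div, abs_div, abs_of_pos hx, div_le_iff₀ hx] at h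
  nlinarith

lemma min_one_lt_two_mul_min_one {a x : ℝ} (h : a < 2 * x) : min a 1 < 2 * min x 1 := by
  rw [mul_min_of_nonneg _ _ zero_le_two]
  exact lt_min (min_le_left a 1 |>.trans_lt h) (min_le_right a 1 |>.trans_lt (by norm_num))

/-- for `x > 0`, `β ∈ (0,1)`, `d` with `‖X⁻¹X̄d‖∞ ≤ β`, and `x⁺ = x + X̄d`,
each coordinate satisfies `min(x⁺ᵢ,1) < 2 min(xᵢ,1)`; consequently for every `w`,
`‖X̄⁺w‖∞ ≤ 2‖X̄w‖∞`. Here `x̄ᵢ = min(xᵢ,1)` and `‖·‖` on `Fin n → ℝ` is the max-norm. -/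
theorem stmt10 {n : ℕ} (x d : Fin n → ℝ) (hx : ∀ i, 0 < x i)
    (β : ℝ) (hβ : β ∈ Set.Ioo (0:ℝ) 1)
    (hd : ‖(fun i => (min (x i) 1 / x i) * d i : Fin n → ℝ)‖ ≤ β)
    (xp : Fin n → ℝ) (hxp : xp = x + (fun i => min (x i) 1 * d i)) :
    (∀ i, min (xp i) 1 < 2 * min (x i) 1) ∧
      ∀ w : Fin n → ℝ,
        ‖(fun i => min (xp i) 1 * w i : Fin n → ℝ)‖ ≤
          2 * ‖(fun i => min (x i) 1 * w i : Fin n → ℝ)‖ := by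
  have hstep (i : Fin n) : |xp i - x i| < x i := by
    have hcoord := (norm_le_pi_norm _ i).trans hd
    simpa [hxp] using abs_mul_lt_of_abs_div_mul_le (hx i) hcoord hβ.2
  have hpos (i : Fin n) : 0 < xp i := by linarith [(abs_lt.1 (hstep i)).1]
  have hlt (i : Fin n) : min (xp i) 1 < 2 * min (x i) 1 :=
    min_one_lt_two_mul_min_one (by linarith [(abs_lt.1 (hstep i)).2])
  refine ⟨hlt, fun w => pi_norm_le_mul_of_forall_norm_le zero_le_two fun i => ?_⟩
  simp only [Real.norm_eq_abs, abs_mul, abs_of_pos (lt_min (hpos i) one_pos),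
    abs_of_pos (lt_min (hx i) one_pos), ← mul_assoc]
  exact mul_le_mul_of_nonneg_right (hlt i).le (abs_nonneg _)
end

section
/- Let H be a symmetric n×n real matrix, g ∈ ℝⁿ, ε ∈ (0, 1), β ∈ [ε, 1), and x ∈ ℝⁿ with x > 0 componentwise. Let v ∈ ℝⁿ, v ≠ 0, satisfy vᵀ(H + 2ε·I)v ≤ ε‖v‖². Define d = −σ·min{ |vᵀHv|/‖v‖³ , β/‖X⁻¹X̄v‖∞ }·v, where σ = 1 if gᵀv ≥ 0 and σ = −1 otherwise. Then gᵀd ≤ 0, and dᵀHd/‖d‖² ≤ −‖d‖ ≤ −ε. -/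
/-! The direction `d` is a multiple `t • v` of `v` with `|t|` the minimum `m`. The sign `σ` turns
`gᵀd` into `-m |gᵀv|`. The curvature of `d` equals that of `v`, which by the curvature hypothesis
is `vᵀHv / ‖v‖² = -|vᵀHv| / ‖v‖²`, and the first term of the minimum bounds `‖d‖ = m ‖v‖` by
`|vᵀHv| / ‖v‖²`. Finally both terms of the minimum, multiplied by `‖v‖`, are at least `ε`: the first because
`vᵀHv ≤ -ε ‖v‖²`, the second because `‖X⁻¹X̄v‖∞ ≤ ‖v‖∞ ≤ ‖v‖` and `β ≥ ε`. -/

open Matrix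

section EuclideanNorm

variable {n : ℕ}

lemma euclNorm_eq_norm_toLp (v : Fin n → ℝ) : euclNorm v = ‖WithLp.toLp 2 v‖ := by
  simp [euclNorm, EuclideanSpace.norm_eq, Real.norm_eq_abs, sq_abs]

lemma euclNorm_smul (t : ℝ) (v : Fin n → ℝ) : euclNorm (t • v) = |t| * euclNorm v := by
  simp only [euclNorm_eq_norm_toLp, WithLp.toLp_smul, norm_smul, Real.norm_eq_abs]

lemma euclNorm_pos {v : Fin n → ℝ} (hv : v ≠ 0) : 0 < euclNorm v := by
  rw [euclNorm_eq_norm_toLp, norm_pos_iff]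
  exact fun h => hv (WithLp.toLp_injective 2 (h.trans (WithLp.toLp_zero 2).symm))

lemma euclNorm_sq (v : Fin n → ℝ) : euclNorm v ^ 2 = v ⬝ᵥ v := by
  rw [euclNorm, Real.sq_sqrt (Finset.sum_nonneg fun i _ => sq_nonneg _)]
  simp only [dotProduct, sq]

lemma norm_le_euclNorm (v : Fin n → ℝ) : ‖v‖ ≤ euclNorm v := by
  rw [euclNorm_eq_norm_toLp]
  exact (pi_norm_le_iff_of_nonneg (norm_nonneg _)).mpr fun i =>
    PiLp.norm_apply_le (WithLp.toLp 2 v) i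

end EuclideanNorm

section QuadraticForm

variable {n : ℕ} (H : Matrix (Fin n) (Fin n) ℝ)

lemma dotProduct_add_smul_one_mulVec (c : ℝ) (v : Fin n → ℝ) :
    v ⬝ᵥ ((H + c • (1 : Matrix (Fin n) (Fin n) ℝ)) *ᵥ v) = v ⬝ᵥ (H *ᵥ v) + c * (v ⬝ᵥ v) := by
  rw [add_mulVec, dotProduct_add, smul_mulVec, one_mulVec, dotProduct_smul, smul_eq_mul]

lemma dotProduct_mulVec_le_of_shifted_le {ε : ℝ} {v : Fin n → ℝ}
    (h : v ⬝ᵥ ((H + (2 * ε) • (1 : Matrix (Fin n) (Fin n) ℝ)) *ᵥ v) ≤ ε * euclNorm v ^ 2) :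
    v ⬝ᵥ (H *ᵥ v) ≤ -ε * euclNorm v ^ 2 := by
  rw [dotProduct_add_smul_one_mulVec, ← euclNorm_sq] at h
  linarith

lemma smul_dotProduct_mulVec_smul (t : ℝ) (v : Fin n → ℝ) :
    (t • v) ⬝ᵥ (H *ᵥ (t • v)) = t ^ 2 * (v ⬝ᵥ (H *ᵥ v)) := by
  rw [mulVec_smul, dotProduct_smul, smul_dotProduct, smul_eq_mul, smul_eq_mul]
  ring

lemma le_abs_dotProduct_mulVec_div_mul {ε : ℝ} {v : Fin n → ℝ} (hv : v ≠ 0)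
    (h : v ⬝ᵥ (H *ᵥ v) ≤ -ε * euclNorm v ^ 2) :
    ε ≤ |v ⬝ᵥ (H *ᵥ v)| / euclNorm v ^ 3 * euclNorm v := by
  have hN := euclNorm_pos hv
  rw [div_mul_eq_mul_div, le_div_iff₀ (by positivity)]
  nlinarith [neg_le_abs (v ⬝ᵥ (H *ᵥ v))]

lemma rayleigh_smul_le_neg_euclNorm {v : Fin n → ℝ} (hv : v ≠ 0) (hq : v ⬝ᵥ (H *ᵥ v) ≤ 0)
    {t : ℝ} (ht : |t| ≤ |v ⬝ᵥ (H *ᵥ v)| / euclNorm v ^ 3) :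
    (t • v) ⬝ᵥ (H *ᵥ (t • v)) / euclNorm (t • v) ^ 2 ≤ -euclNorm (t • v) := by
  rcases eq_or_ne t 0 with rfl | ht0
  · simp [euclNorm]
  have hN := euclNorm_pos hv
  rw [abs_of_nonpos hq, le_div_iff₀ (by positivity)] at ht
  rw [smul_dotProduct_mulVec_smul, euclNorm_smul, div_le_iff₀ (by positivity), ← sq_abs t]
  nlinarith [mul_le_mul_of_nonneg_left ht (sq_nonneg |t|)]

end QuadraticForm

section Rescaling

variable {n : ℕ} {a : Fin n → ℝ}

lemma norm_mul_le_euclNorm (ha : ∀ i, |a i| ≤ 1) (v : Fin n → ℝ) : ‖a * v‖ ≤ euclNorm v := by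
  refine le_trans ((pi_norm_le_iff_of_nonneg (norm_nonneg v)).mpr fun i => ?_)
    (norm_le_euclNorm v)
  calc ‖(a * v) i‖ = |a i| * ‖v i‖ := by rw [Pi.mul_apply, norm_mul, Real.norm_eq_abs]
    _ ≤ 1 * ‖v i‖ := by gcongr; exact ha i
    _ ≤ ‖v‖ := by rw [one_mul]; exact norm_le_pi_norm v i

lemma le_div_norm_mul_mul_euclNorm (ha₀ : ∀ i, a i ≠ 0) (ha : ∀ i, |a i| ≤ 1)
    {v : Fin n → ℝ} (hv : v ≠ 0) {β : ℝ} (hβ : 0 ≤ β) :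
    β ≤ β / ‖a * v‖ * euclNorm v := by
  obtain ⟨i, hi⟩ := Function.ne_iff.mp hv
  have hav : a * v ≠ 0 := Function.ne_iff.mpr ⟨i, mul_ne_zero (ha₀ i) hi⟩
  rw [div_mul_eq_mul_div, le_div_iff₀ (norm_pos_iff.2 hav)]
  exact mul_le_mul_of_nonneg_left (norm_mul_le_euclNorm ha v) hβ

end Rescaling

lemma min_one_div_self_pos {x : ℝ} (hx : 0 < x) : 0 < min x 1 / x :=
  div_pos (lt_min hx one_pos) hx

lemma abs_min_one_div_self_le_one {x : ℝ} (hx : 0 < x) : |min x 1 / x| ≤ 1 := by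
  rw [abs_of_pos (min_one_div_self_pos hx)]
  exact div_le_one_of_le₀ (min_le_left _ _) hx.le

lemma ite_one_neg_one_mul_self (a : ℝ) : (if 0 ≤ a then 1 else -1) * a = |a| := by
  split_ifs with h
  · rw [one_mul, abs_of_nonneg h]
  · rw [neg_one_mul, abs_of_neg (not_le.1 h)]

lemma abs_ite_one_neg_one (p : Prop) [Decidable p] : |(if p then 1 else -1 : ℝ)| = 1 := by
  split_ifs <;> simp

lemma dotProduct_neg_sign_smul_nonpos {n : ℕ} (g v : Fin n → ℝ) {m : ℝ} (hm : 0 ≤ m) :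
    g ⬝ᵥ ((-(if 0 ≤ g ⬝ᵥ v then 1 else -1 : ℝ) * m) • v) ≤ 0 := by
  calc g ⬝ᵥ ((-(if 0 ≤ g ⬝ᵥ v then 1 else -1 : ℝ) * m) • v)
        = -(m * ((if 0 ≤ g ⬝ᵥ v then 1 else -1) * (g ⬝ᵥ v))) := by
          rw [dotProduct_smul, smul_eq_mul]; ring
    _ = -(m * |g ⬝ᵥ v|) := by rw [ite_one_neg_one_mul_self]
    _ ≤ 0 := neg_nonpos.2 (mul_nonneg hm (abs_nonneg _))

theorem stmt13_general {n : ℕ} (H : Matrix (Fin n) (Fin n) ℝ)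
    (g x : Fin n → ℝ) (hx : ∀ i, 0 < x i)
    (ε : ℝ) (hε : ε ∈ Set.Ioo (0:ℝ) 1)
    (β : ℝ) (hβ : β ∈ Set.Ico ε 1)
    (v : Fin n → ℝ) (hv : v ≠ 0)
    (hcurv : v ⬝ᵥ ((H + (2 * ε) • (1 : Matrix (Fin n) (Fin n) ℝ)) *ᵥ v)
      ≤ ε * euclNorm v ^ 2)
    (σ : ℝ) (hσ : σ = if 0 ≤ g ⬝ᵥ v then (1:ℝ) else -1)
    (d : Fin n → ℝ)
    (hd : d = (-σ * min (|v ⬝ᵥ (H *ᵥ v)| / euclNorm v ^ 3)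
      (β / ‖(fun i => (min (x i) 1 / x i) * v i : Fin n → ℝ)‖)) • v) :
    g ⬝ᵥ d ≤ 0 ∧
      d ⬝ᵥ (H *ᵥ d) / euclNorm d ^ 2 ≤ -euclNorm d ∧
      -euclNorm d ≤ -ε := by
  obtain ⟨hε0, -⟩ := hε
  obtain ⟨hεβ, -⟩ := hβ
  have hN := euclNorm_pos hv
  have hq := dotProduct_mulVec_le_of_shifted_le H hcurv
  set c₁ := |v ⬝ᵥ (H *ᵥ v)| / euclNorm v ^ 3
  set c₂ := β / ‖(fun i => (min (x i) 1 / x i) * v i : Fin n → ℝ)‖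
  have hc₁ : ε ≤ c₁ * euclNorm v := le_abs_dotProduct_mulVec_div_mul H hv hq
  have hβ0 : 0 ≤ β := hε0.le.trans hεβ
  have hc₂ : ε ≤ c₂ * euclNorm v := hεβ.trans <|
    le_div_norm_mul_mul_euclNorm (fun i => (min_one_div_self_pos (hx i)).ne')
      (fun i => abs_min_one_div_self_le_one (hx i)) hv hβ0
  have hm : 0 ≤ min c₁ c₂ := le_min (by positivity) (div_nonneg hβ0 (norm_nonneg _))
  have hstep : |-σ * min c₁ c₂| = min c₁ c₂ := by
    rw [abs_mul, abs_neg, hσ, abs_ite_one_neg_one, one_mul, abs_of_nonneg hm]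
  subst hd
  refine ⟨hσ ▸ dotProduct_neg_sign_smul_nonpos g v hm, ?_, ?_⟩
  · exact rayleigh_smul_le_neg_euclNorm H hv (hq.trans (by nlinarith))
      (hstep.trans_le (min_le_left _ _))
  · rw [neg_le_neg_iff, euclNorm_smul, hstep, min_mul_of_nonneg _ _ hN.le]
    exact le_min hc₁ hc₂

/-- let `H` be symmetric, `g ∈ ℝⁿ`, `ε ∈ (0,1)`, `β ∈ [ε,1)`, `x > 0`,
and `v ≠ 0` with `vᵀ(H + 2εI)v ≤ ε‖v‖²`. Define
`d = −σ min{|vᵀHv|/‖v‖³, β/‖X⁻¹X̄v‖∞} v` where `σ = 1` if `gᵀv ≥ 0`, `σ = −1` otherwise.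
Then `gᵀd ≤ 0` and `dᵀHd/‖d‖² ≤ −‖d‖ ≤ −ε`. Here `‖·‖` on the vector `v` (via
`euclNorm`) is the Euclidean norm and `‖·‖` on `Fin n → ℝ` is the max-norm. -/
theorem stmt13 {n : ℕ} (H : Matrix (Fin n) (Fin n) ℝ) (hH : H.IsSymm)
    (g x : Fin n → ℝ) (hx : ∀ i, 0 < x i)
    (ε : ℝ) (hε : ε ∈ Set.Ioo (0:ℝ) 1)
    (β : ℝ) (hβ : β ∈ Set.Ico ε 1)
    (v : Fin n → ℝ) (hv : v ≠ 0)
    (hcurv : v ⬝ᵥ ((H + (2 * ε) • (1 : Matrix (Fin n) (Fin n) ℝ)) *ᵥ v)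
      ≤ ε * euclNorm v ^ 2)
    (σ : ℝ) (hσ : σ = if 0 ≤ g ⬝ᵥ v then (1:ℝ) else -1)
    (d : Fin n → ℝ)
    (hd : d = (-σ * min (|v ⬝ᵥ (H *ᵥ v)| / euclNorm v ^ 3)
      (β / ‖(fun i => (min (x i) 1 / x i) * v i : Fin n → ℝ)‖)) • v) :
    g ⬝ᵥ d ≤ 0 ∧
      d ⬝ᵥ (H *ᵥ d) / euclNorm d ^ 2 ≤ -euclNorm d ∧
      -euclNorm d ≤ -ε :=
  stmt13_general H g x hx ε hε β hβ v hv hcurv σ hσ d hd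
end

section
/- Let ω > 0, let k ≥ 0, and let x⁰, x¹, …, x^{k+1} be vectors in ℝⁿ with xʲ > 0 componentwise for all j = 0,…,k+1 and ‖x⁰‖∞ ≤ ω. Suppose the vectors are generated by updates x^{j+1} = xʲ + αⱼ·X̄ⱼdʲ for j = 0,…,k, where αⱼ > 0, dʲ ∈ ℝⁿ, and X̄ⱼ = diag(min(xʲ₁,1),…,min(xʲₙ,1)). Then Σᵢ(−log x_i^{k+1} + log x_i⁰) ≥ −n·(log ω − minᵢ log x_i⁰) − (√n/ω)·Σ_{j=0}^{k} αⱼ‖dʲ‖, where ‖·‖ denotes the Euclidean norm. -/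
/-! Each step moves coordinate `i` by at most `αⱼ |dʲᵢ|`, because the scaling `min (xʲᵢ) 1` lies in
`[0, 1]`; so `x^{k+1}ᵢ ≤ x⁰ᵢ + Σⱼ αⱼ |dʲᵢ|`. The tangent-line bound `log y ≤ log ω + y/ω - 1` turns
this into a lower bound on `-log x^{k+1}ᵢ`; summing over `i`, the `x⁰` part costs at most `n`
since `x⁰ᵢ ≤ ω`, and Cauchy–Schwarz gives `Σᵢ |dʲᵢ| ≤ √n ‖dʲ‖`. -/

open Finset

lemma sum_abs_le_sqrt_mul_euclNorm {n : ℕ} (v : Fin n → ℝ) :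
    ∑ i, |v i| ≤ Real.sqrt n * euclNorm v := by
  have h : (∑ i, |v i|) ^ 2 ≤ n * ∑ i, v i ^ 2 := by
    simpa [sq_abs] using sq_sum_le_card_mul_sum_sq (s := univ) (f := fun i => |v i|)
  rw [euclNorm, ← Real.sqrt_mul (Nat.cast_nonneg n)]
  exact Real.le_sqrt_of_sq_le h

lemma sum_sum_mul_abs_le_sqrt_mul {ι : Type*} {n : ℕ} (s : Finset ι) (a : ι → ℝ)
    (ha : ∀ j ∈ s, 0 ≤ a j) (d : ι → Fin n → ℝ) :
    ∑ i, ∑ j ∈ s, a j * |d j i| ≤ Real.sqrt n * ∑ j ∈ s, a j * euclNorm (d j) := by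
  rw [sum_comm, mul_sum]
  refine sum_le_sum fun j hj => ?_
  rw [← mul_sum, mul_left_comm]
  exact mul_le_mul_of_nonneg_left (sum_abs_le_sqrt_mul_euclNorm (d j)) (ha j hj)

lemma sum_le_card_mul_of_norm_le {n : ℕ} {x : Fin n → ℝ} {ω : ℝ} (h : ‖x‖ ≤ ω) :
    ∑ i, x i ≤ n * ω := by
  calc ∑ i, x i ≤ ∑ _i : Fin n, ω :=
        sum_le_sum fun i _ => (Real.le_norm_self _).trans ((norm_le_pi_norm x i).trans h)
    _ = n * ω := by simp

lemma le_add_sum_range_of_succ_le {x c : ℕ → ℝ} {m : ℕ}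
    (h : ∀ j < m, x (j + 1) ≤ x j + c j) : x m ≤ x 0 + ∑ j ∈ range m, c j := by
  have hstep : ∑ j ∈ range m, (x (j + 1) - x j) ≤ ∑ j ∈ range m, c j :=
    sum_le_sum fun j hj => by linarith [h j (mem_range.mp hj)]
  rw [sum_range_sub] at hstep
  linarith

lemma min_one_mul_le_abs {x : ℝ} (hx : 0 ≤ x) (d : ℝ) : min x 1 * d ≤ |d| :=
  calc min x 1 * d ≤ min x 1 * |d| := mul_le_mul_of_nonneg_left (le_abs_self d) (le_min hx zero_le_one)
    _ ≤ |d| := mul_le_of_le_one_left (abs_nonneg d) (min_le_right x 1)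

lemma sub_div_le_neg_log_add_log {x y ω m : ℝ} (hy : 0 < y) (hω : 0 < ω)
    (hm : m ≤ Real.log x) : m - Real.log ω + 1 - y / ω ≤ -Real.log y + Real.log x := by
  have h := Real.log_le_sub_one_of_pos (div_pos hy hω)
  rw [Real.log_div hy.ne' hω.ne'] at h
  linarith

theorem stmt17_general {n : ℕ} (ω : ℝ) (hω : 0 < ω) (k : ℕ)
    (xs : ℕ → Fin n → ℝ) (αs : ℕ → ℝ) (ds : ℕ → Fin n → ℝ)
    (hpos : ∀ j ≤ k + 1, ∀ i, 0 < xs j i)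
    (hx0 : ‖xs 0‖ ≤ ω)
    (hα : ∀ j ≤ k, 0 < αs j)
    (hupd : ∀ j ≤ k, xs (j+1) = xs j + αs j • (fun i => min (xs j i) 1 * ds j i : Fin n → ℝ)) :
    ∑ i, (-Real.log (xs (k+1) i) + Real.log (xs 0 i)) ≥
      -(n : ℝ) * (Real.log ω - ⨅ i, Real.log (xs 0 i))
      - (Real.sqrt n / ω) * ∑ j ∈ Finset.range (k+1), αs j * euclNorm (ds j) := by
  set m := ⨅ i, Real.log (xs 0 i)
  set A := ∑ j ∈ range (k + 1), αs j * euclNorm (ds j)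
  have hgrow (i : Fin n) : xs (k + 1) i ≤ xs 0 i + ∑ j ∈ range (k + 1), αs j * |ds j i| := by
    refine le_add_sum_range_of_succ_le (x := fun j => xs j i) fun j hj => ?_
    have hjk : j ≤ k := Nat.lt_succ_iff.mp hj
    rw [hupd j hjk]
    exact (add_le_add_iff_left (xs j i)).mpr (mul_le_mul_of_nonneg_left
      (min_one_mul_le_abs (hpos j (by omega) i).le _) (hα j hjk).le)
  have hsum : ∑ i, xs (k + 1) i ≤ n * ω + Real.sqrt n * A :=
    calc ∑ i, xs (k + 1) i ≤ ∑ i, xs 0 i + ∑ i, ∑ j ∈ range (k + 1), αs j * |ds j i| := by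
          rw [← sum_add_distrib]; exact sum_le_sum fun i _ => hgrow i
      _ ≤ n * ω + Real.sqrt n * A := add_le_add (sum_le_card_mul_of_norm_le hx0)
          (sum_sum_mul_abs_le_sqrt_mul _ _
            (fun j hj => (hα j (Nat.lt_succ_iff.mp (mem_range.mp hj))).le) ds)
  have hterm := sum_le_sum fun i (_ : i ∈ univ) => sub_div_le_neg_log_add_log (m := m)
    (hpos (k + 1) le_rfl i) hω
    (ciInf_le (Set.finite_range fun i => Real.log (xs 0 i)).bddBelow i)
  have hdiv : (∑ i, xs (k + 1) i) / ω ≤ n + Real.sqrt n / ω * A := by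
    rw [div_le_iff₀ hω, add_mul, div_mul_eq_mul_div, div_mul_cancel₀ _ hω.ne']
    linarith
  simp only [sum_sub_distrib, ← sum_div, sum_const, card_univ, Fintype.card_fin,
    nsmul_eq_mul] at hterm
  linarith

/-- let `ω > 0`, `k ≥ 0`, and let `x⁰, …, x^{k+1}` be positive vectors with
`‖x⁰‖∞ ≤ ω`, generated by `x^{j+1} = xʲ + αⱼ X̄ⱼ dʲ` with `αⱼ > 0`. Then
`Σᵢ(−log x_i^{k+1} + log x_i⁰) ≥ −n(log ω − minᵢ log x_i⁰) − (√n/ω) Σ_{j≤k} αⱼ‖dʲ‖`,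
where `‖dʲ‖` is the Euclidean norm, `‖x⁰‖∞` the max-norm (the norm on `Fin n → ℝ`),
and `minᵢ log x_i⁰` is expressed as `⨅ i, log x_i⁰`. -/
theorem stmt17 {n : ℕ} (hn : 0 < n) (ω : ℝ) (hω : 0 < ω) (k : ℕ)
    (xs : ℕ → Fin n → ℝ) (αs : ℕ → ℝ) (ds : ℕ → Fin n → ℝ)
    (hpos : ∀ j ≤ k + 1, ∀ i, 0 < xs j i)
    (hx0 : ‖xs 0‖ ≤ ω)
    (hα : ∀ j ≤ k, 0 < αs j)
    (hupd : ∀ j ≤ k, xs (j+1) = xs j + αs j • (fun i => min (xs j i) 1 * ds j i : Fin n → ℝ)) :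
    ∑ i, (-Real.log (xs (k+1) i) + Real.log (xs 0 i)) ≥
      -(n : ℝ) * (Real.log ω - ⨅ i, Real.log (xs 0 i))
      - (Real.sqrt n / ω) * ∑ j ∈ Finset.range (k+1), αs j * euclNorm (ds j) :=
  stmt17_general ω hω k xs αs ds hpos hx0 hα hupd
end
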